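/- For every n there exists a finite tree (as an undirected graph) whose path-width is at least n. -/

import Mathlib

/-!
In a path decomposition of the complete ternary tree, some bag meets the subtree of height `k`
below any vertex `v` in at least `k + 1` vertices. Otherwise each child of `v` has a bag containing
`k + 1` vertices of its own subtree and hence no other vertex below `v`; these three bags are
distinct, and the middle one must meet the path from the first child's subtree through `v` to
the last child's subtree, a path lying below `v` but outside the middle child's subtree.
-/

/-- A path decomposition of `G` with `n` bags. -/
structure PathDecomp {V : Type} (G : SimpleGraph V) (n : ℕ) where
  bag : Fin n → Set V
  mem_bag : ∀ v, ∃ i, v ∈ bag i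
  mem_edge : ∀ u v, G.Adj u v → ∃ i, u ∈ bag i ∧ v ∈ bag i
  interval : ∀ (v : V) (i j m : Fin n), i ≤ m → m ≤ j →
    v ∈ bag i → v ∈ bag j → v ∈ bag m

/-- `G` has path-width at most `w`. -/
def pwLe {V : Type} (G : SimpleGraph V) (w : ℕ) : Prop :=
  ∃ n, ∃ P : PathDecomp G n, ∀ i, (P.bag i).ncard ≤ w + 1

/-- The path-width of `G`. -/
noncomputable def pw {V : Type} (G : SimpleGraph V) : ℕ := sInf {w | pwLe G w}

open SimpleGraph

namespace PathDecomp

variable {V : Type} {G : SimpleGraph V} {m : ℕ}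

lemma exists_mem_support_mem_bag (P : PathDecomp G m) {u w : V} (W : G.Walk u w)
    {i j t : Fin m} (hit : i ≤ t) (htj : t ≤ j) (hu : u ∈ P.bag i) (hw : w ∈ P.bag j) :
    ∃ p ∈ W.support, p ∈ P.bag t := by
  induction W generalizing i with
  | nil => exact ⟨_, by simp, P.interval _ i j t hit htj hu hw⟩
  | @cons u u' w huu' W ih =>
    obtain ⟨s, hus, hu's⟩ := P.mem_edge u u' huu'
    rcases le_or_gt s t with hst | hts
    · obtain ⟨p, hp, hpt⟩ := ih hst hu's hw
      exact ⟨p, by simp [hp], hpt⟩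
    · exact ⟨u, by simp, P.interval u i s t hit hts.le hu hus⟩

end PathDecomp

lemma pwLe_natCard {V : Type} (G : SimpleGraph V) : pwLe G (Nat.card V) :=
  ⟨1, ⟨fun _ => Set.univ, fun _ => ⟨0, trivial⟩, fun _ _ _ => ⟨0, trivial, trivial⟩,
    fun _ _ _ _ _ _ _ _ => trivial⟩, fun _ => by simp [Set.ncard_univ]⟩

lemma le_pw {V : Type} {G : SimpleGraph V} {n : ℕ}
    (h : ∀ m (P : PathDecomp G m), ∃ i, n + 1 ≤ (P.bag i).ncard) : n ≤ pw G := by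
  refine le_csInf ⟨_, pwLe_natCard G⟩ ?_
  rintro w ⟨m, P, hP⟩
  obtain ⟨i, hi⟩ := h m P
  have := hP i
  omega

lemma Fin.exists_lt_lt_of_injective {β : Type*} [LinearOrder β] {f : Fin 3 → β}
    (hf : Function.Injective f) : ∃ a b c, f a < f b ∧ f b < f c := by
  have hcard : (Finset.univ.image f).card = 3 := by
    rw [Finset.card_image_of_injective _ hf]; simp
  let e := (Finset.univ.image f).orderEmbOfFin hcard
  have hrange : ∀ i, ∃ a, f a = e i := fun i => by
    obtain ⟨a, -, ha⟩ := Finset.mem_image.1 ((Finset.univ.image f).orderEmbOfFin_mem hcard i)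
    exact ⟨a, ha⟩
  choose g hg using hrange
  exact ⟨g 0, g 1, g 2, by simp only [hg]; exact e.strictMono (by decide),
    by simp only [hg]; exact e.strictMono (by decide)⟩

/-- Vertices are the words of length at most `N`; `a :: l` is a child of `l`. -/
def completeTree (α : Type) (N : ℕ) : SimpleGraph {l : List α // l.length ≤ N} where
  Adj u v := (∃ a, u.1 = a :: v.1) ∨ (∃ a, v.1 = a :: u.1)
  symm := ⟨fun _ _ => Or.symm⟩
  loopless := ⟨fun u h => by
    rcases h with ⟨a, h⟩ | ⟨a, h⟩ <;> simpa using congrArg List.length h⟩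

namespace completeTree

variable {α : Type} {N : ℕ}

instance [Finite α] : Finite {l : List α // l.length ≤ N} :=
  (List.finite_length_le α N).to_subtype

lemma adj_cons (a : α) (v : List α) (h : (a :: v).length ≤ N) :
    (completeTree α N).Adj ⟨a :: v, h⟩ ⟨v, Nat.le_of_succ_le h⟩ :=
  Or.inl ⟨a, rfl⟩

def subtree (s : List α) : Set {l : List α // l.length ≤ N} := {x | s <:+ x.1}

lemma subtree_cons_subset (a : α) (s : List α) :
    (subtree (a :: s) : Set {l : List α // l.length ≤ N}) ⊆ subtree s :=
  fun _ hx => (List.suffix_cons a s).trans hx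

lemma disjoint_subtree_cons {a b : α} (hab : a ≠ b) (s : List α) :
    Disjoint (subtree (a :: s) : Set {l : List α // l.length ≤ N}) (subtree (b :: s)) := by
  refine Set.disjoint_left.2 fun x ha hb => hab ?_
  obtain ⟨t₁, ht₁⟩ := ha
  obtain ⟨t₂, ht₂⟩ := hb
  have := (List.append_inj' (ht₁.trans ht₂.symm) (by simp)).2
  simpa using this

lemma exists_walk_to_suffix {s : List α} (x : {l : List α // l.length ≤ N}) (hs : s <:+ x.1) :
    ∃ W : (completeTree α N).Walk x ⟨s, hs.length_le.trans x.2⟩,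
      ∀ p ∈ W.support, p ∈ subtree s := by
  generalize hs.length_le.trans x.2 = hN
  obtain ⟨t, ht⟩ := hs
  induction t generalizing x with
  | nil =>
    obtain rfl : x = ⟨s, hN⟩ := Subtype.ext (by simpa using ht.symm)
    exact ⟨Walk.nil, by simp [subtree]⟩
  | cons a t ih =>
    have hy : (t ++ s).length ≤ N := by
      have := x.2
      rw [← ht] at this
      simp only [List.cons_append, List.length_cons] at this
      omega
    obtain ⟨W, hW⟩ := ih ⟨t ++ s, hy⟩ rfl
    have hxy : (completeTree α N).Adj x ⟨t ++ s, hy⟩ := Or.inl ⟨a, ht.symm⟩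
    refine ⟨Walk.cons hxy W, ?_⟩
    simp only [Walk.support_cons, List.mem_cons, forall_eq_or_imp]
    exact ⟨⟨a :: t, ht⟩, hW⟩

lemma connected : (completeTree α N).Connected := by
  let root : {l : List α // l.length ≤ N} := ⟨[], Nat.zero_le N⟩
  have hroot : ∀ x, (completeTree α N).Reachable x root := fun x =>
    (exists_walk_to_suffix x (List.nil_suffix (l := x.1))).elim fun W _ => ⟨W⟩
  exact (connected_iff _).2 ⟨fun x y => (hroot x).trans (hroot y).symm, ⟨root⟩⟩

lemma eq_of_adj_of_mem_subtree_of_notMem {s : List α} {p q : {l : List α // l.length ≤ N}}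
    (h : (completeTree α N).Adj p q) (hp : p ∈ subtree s) (hq : q ∉ subtree s) :
    p.1 = s ∧ q.1 = s.tail := by
  rcases h with ⟨a, ha⟩ | ⟨a, ha⟩
  · have hp' : s <:+ a :: q.1 := ha ▸ hp
    rcases List.suffix_cons_iff.1 hp' with hs | hs
    · exact ⟨ha.trans hs.symm, by simp [hs]⟩
    · exact absurd hs hq
  · exact absurd (hp.trans (ha ▸ List.suffix_cons a p.1)) hq

lemma isAcyclic : (completeTree α N).IsAcyclic := by
  refine isAcyclic_iff_forall_adj_isBridge.2 fun x y hxy => ?_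
  wlog hchild : ∃ a, x.1 = a :: y.1 generalizing x y
  · rw [Sym2.eq_swap]
    exact this y x hxy.symm (hxy.resolve_left hchild)
  obtain ⟨a, ha⟩ := hchild
  rw [isBridge_iff]
  rintro ⟨W⟩
  have hy : y ∉ subtree x.1 := fun h => by simpa [ha] using h.length_le
  obtain ⟨d, -, hfst, hsnd⟩ := W.exists_boundary_dart (subtree x.1) List.suffix_rfl hy
  have hadj := d.adj
  rw [deleteEdges_adj] at hadj
  obtain ⟨h1, h2⟩ := eq_of_adj_of_mem_subtree_of_notMem hadj.1 hfst hsnd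
  have hdx : d.fst = x := Subtype.ext h1
  have hdy : d.snd = y := Subtype.ext (by rw [h2, ha]; rfl)
  exact hadj.2 (by rw [hdx, hdy]; rfl)

lemma isTree : (completeTree α N).IsTree := ⟨connected, isAcyclic⟩

lemma exists_mem_bag_diff_subtree_cons {m : ℕ} (P : PathDecomp (completeTree α N) m)
    {v : List α} {a b c : α} (hab : a ≠ b) (hcb : c ≠ b) {u w : {l : List α // l.length ≤ N}}
    (hu : u ∈ subtree (a :: v)) (hw : w ∈ subtree (c :: v)) {i j t : Fin m} (hit : i ≤ t)
    (htj : t ≤ j) (hui : u ∈ P.bag i) (hwj : w ∈ P.bag j) :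
    ∃ p ∈ P.bag t, p ∈ subtree v \ subtree (b :: v) := by
  have hS : ∀ a', a' ≠ b → (subtree (a' :: v) : Set {l : List α // l.length ≤ N}) ⊆
      subtree v \ subtree (b :: v) := fun a' ha' x hx =>
    ⟨subtree_cons_subset a' v hx, Set.disjoint_left.1 (disjoint_subtree_cons ha' v) hx⟩
  obtain ⟨Wu, hWu⟩ := exists_walk_to_suffix u hu
  obtain ⟨Ww, hWw⟩ := exists_walk_to_suffix w hw
  let W := Wu.append (.cons (adj_cons a v _) (.cons (adj_cons c v _).symm Ww.reverse))
  obtain ⟨p, hpW, hpt⟩ := P.exists_mem_support_mem_bag W hit htj hui hwj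
  refine ⟨p, hpt, ?_⟩
  simp only [W, Walk.mem_support_append_iff, Walk.support_cons, Walk.support_reverse,
    List.mem_cons, List.mem_reverse] at hpW
  rcases hpW with hp | rfl | rfl | hp
  · exact hS a hab (hWu p hp)
  · exact hS a hab List.suffix_rfl
  · exact ⟨List.suffix_rfl, fun h => by simpa using h.length_le⟩
  · exact hS c hcb (hWw p hp)

lemma exists_bag_ncard_inter_subtree [Finite α] (hα : 3 ≤ Nat.card α) {m : ℕ}
    (P : PathDecomp (completeTree α N) m) (k : ℕ) {v : List α} (hv : v.length + k ≤ N) :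
    ∃ i, k + 1 ≤ (P.bag i ∩ subtree v).ncard := by
  induction k generalizing v with
  | zero =>
    obtain ⟨i, hi⟩ := P.mem_bag ⟨v, by omega⟩
    have hne : (P.bag i ∩ subtree v).Nonempty := ⟨_, hi, List.suffix_rfl⟩
    exact ⟨i, (Set.ncard_pos (Set.toFinite _)).2 hne⟩
  | succ k ih =>
    by_contra! hsmall
    -- a bag meeting a child's subtree in `k + 1` vertices has no room for anything else below `v`
    have hchild : ∀ a, ∃ i, (P.bag i ∩ subtree (a :: v)).Nonempty ∧
        P.bag i ∩ subtree v ⊆ subtree (a :: v) := by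
      intro a
      obtain ⟨i, hi⟩ := ih (v := a :: v) (by simp only [List.length_cons]; omega)
      have hsub : P.bag i ∩ subtree (a :: v) ⊆ P.bag i ∩ subtree v :=
        Set.inter_subset_inter_right _ (subtree_cons_subset a v)
      have heq := Set.eq_of_subset_of_ncard_le hsub (by have := hsmall i; omega) (Set.toFinite _)
      exact ⟨i, Set.nonempty_of_ncard_ne_zero (by omega), heq ▸ Set.inter_subset_right⟩
    choose I hne hsub using hchild
    let e : Fin 3 ↪ α := (Fin.castLEEmb hα).trans (Finite.equivFin α).symm.toEmbedding
    have hinj : Function.Injective (I ∘ e) := by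
      intro a b (hab : I (e a) = I (e b))
      by_contra hne'
      obtain ⟨x, hxbag, hx⟩ := hne (e a)
      have hxb := hsub (e b) ⟨hab ▸ hxbag, subtree_cons_subset _ _ hx⟩
      exact Set.disjoint_left.1 (disjoint_subtree_cons (e.injective.ne hne') v) hx hxb
    obtain ⟨a, b, c, hab, hbc⟩ := Fin.exists_lt_lt_of_injective hinj
    obtain ⟨u, hu, hua⟩ := hne (e a)
    obtain ⟨w, hw, hwc⟩ := hne (e c)
    obtain ⟨p, hp, hpv, hpb⟩ := exists_mem_bag_diff_subtree_cons P
      (e.injective.ne (hinj.ne_iff.1 hab.ne)) (e.injective.ne (hinj.ne_iff.1 hbc.ne'))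
      hua hwc hab.le hbc.le hu hw
    exact hpb (hsub (e b) ⟨hp, hpv⟩)

end completeTree

/-- for every n there is a finite tree of path-width at least n. -/
theorem stmt9 (n : ℕ) :
    ∃ (V : Type) (_ : Fintype V) (G : SimpleGraph V), G.IsTree ∧ n ≤ pw G := by
  refine ⟨_, Fintype.ofFinite _, completeTree (Fin 3) n, completeTree.isTree, le_pw fun m P => ?_⟩
  obtain ⟨i, hi⟩ := completeTree.exists_bag_ncard_inter_subtree (by simp) P n (v := []) (by simp)
  exact ⟨i, hi.trans (Set.ncard_inter_le_ncard_left _ _ (Set.toFinite _))⟩
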